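/- arXiv:1112.0490 — 3 statements merged into one kernel-verified Lean document; each statement's English description precedes it below -/
import Mathlib

section
/- Let δ ∈ (0,1), λ > 0, k > 0, let v : ℝ³ → ℝ be measurable with γ := max( ∫_{ℝ³} |x|² (1+|x|^δ) |v(x)|² dx , ∫_{ℝ³} (1+|x|^δ) |v(x)|² dx ) < ∞, and let ψ ∈ L²(ℝ³, ℂ) satisfy ∫_{ℝ³} (1+|x|^δ)^{-1} |ψ(x)|² dx = 1, v·ψ ∈ L¹(ℝ³), and the integral equation ψ(x) = (λ/(4π)) ∫_{ℝ³} e^{-k|x-x'|}/|x-x'| · v(x') ψ(x') dx' for almost every x. Define f(x) := (λ/(4π)) (e^{-k|x|}/|x|) ∫_{ℝ³} v(x') ψ(x') dx'. Then ∫_{ℝ³} |ψ(x) - f(x)|² dx ≤ λ² γ / (2π). -/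
/-!
Write `G y = e^{-k‖y‖}/‖y‖`. The integral equation gives
`ψ x - f x = (λ/4π) ∫ (G (x - x') - G x) v x' ψ x' dx'`, so Cauchy–Schwarz with the weight
`1 + ‖x'‖^δ` and the normalisation of `ψ` bound `‖ψ x - f x‖²` by
`(λ/4π)² ∫ (G (x - x') - G x)² (1 + ‖x'‖^δ) v x'² dx'`. Integrating in `x` and exchanging the
integrals, it remains to see `∫ (G (x - a) - G x)² dx = 4π (1 - e^{-k‖a‖}) / k ≤ 2π (1 + ‖a‖²)`.
This comes from the overlap integral `∫ G (x - a) G x dx = 2π e^{-k‖a‖} / k`: in cylindrical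
coordinates around the axis through `0` and `a`, the substitution `u = ‖x‖ + ‖x - a‖` turns
`dx / (‖x‖ ‖x - a‖)` into `2π du` on `u > ‖a‖`.
-/

open MeasureTheory Real Set
open scoped ENNReal

local notation "ℝ³" => EuclideanSpace ℝ (Fin 3)

theorem abs_add_abs_sub_lt_iff {b z u : ℝ} (hb : 0 ≤ b) :
    |z| + |z - b| < u ↔ b < u ∧ z ∈ Ioo ((b - u) / 2) ((b + u) / 2) := by
  rw [mem_Ioo]
  rcases abs_cases z with ⟨h1, _⟩ | ⟨h1, _⟩ <;> rcases abs_cases (z - b) with ⟨h2, _⟩ | ⟨h2, _⟩ <;>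
    rw [h1, h2] <;> constructor <;> (try rintro ⟨_, _, _⟩) <;> (try intro) <;>
    (try refine ⟨?_, ?_, ?_⟩) <;> linarith

theorem volume_setOf_abs_add_abs_sub_lt {b : ℝ} (hb : 0 ≤ b) (u : ℝ) :
    volume {z : ℝ | |z| + |z - b| < u} = (Ioi b).indicator ENNReal.ofReal u := by
  by_cases hu : b < u
  · have : {z : ℝ | |z| + |z - b| < u} = Ioo ((b - u) / 2) ((b + u) / 2) := by
      ext z; exact (abs_add_abs_sub_lt_iff hb).trans (and_iff_right hu)
    rw [this, Real.volume_Ioo, indicator_of_mem (mem_Ioi.2 hu)]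
    ring_nf
  · simp [abs_add_abs_sub_lt_iff hb, hu]

theorem lintegral_lintegral_Ioi_abs_add_abs_sub {b : ℝ} (hb : 0 ≤ b) {h : ℝ → ℝ≥0∞}
    (hh : Measurable h) :
    ∫⁻ z, ∫⁻ u in Ioi (|z| + |z - b|), h u = ∫⁻ u in Ioi b, ENNReal.ofReal u * h u := by
  set S := {p : ℝ × ℝ | |p.1| + |p.1 - b| < p.2}
  have hS : MeasurableSet S := measurableSet_lt (by fun_prop) measurable_snd
  calc ∫⁻ z, ∫⁻ u in Ioi (|z| + |z - b|), h u
      = ∫⁻ z, ∫⁻ u, S.indicator (fun p => h p.2) (z, u) := by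
        refine lintegral_congr fun z => ?_
        rw [← lintegral_indicator measurableSet_Ioi]
        rfl
    _ = ∫⁻ u, ∫⁻ z, S.indicator (fun p => h p.2) (z, u) :=
        lintegral_lintegral_swap ((hh.comp measurable_snd).indicator hS).aemeasurable
    _ = ∫⁻ u, volume {z : ℝ | |z| + |z - b| < u} * h u := by
        refine lintegral_congr fun u => ?_
        rw [mul_comm, ← lintegral_indicator_const (measurableSet_lt (by fun_prop) measurable_const)]
        rfl
    _ = ∫⁻ u in Ioi b, ENNReal.ofReal u * h u := by
        simp_rw [volume_setOf_abs_add_abs_sub_lt hb, ← lintegral_indicator measurableSet_Ioi]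
        congr with u
        by_cases hu : u ∈ Ioi b <;> simp [hu]

theorem hasDerivAt_sqrt_add_sq {c ρ : ℝ} (hc : 0 ≤ c) (hρ : 0 < ρ) :
    HasDerivAt (fun t => √(c + t ^ 2)) (ρ / √(c + ρ ^ 2)) ρ := by
  have hpos : 0 < c + ρ ^ 2 := by positivity
  convert ((hasDerivAt_pow 2 ρ).const_add c).sqrt hpos.ne' using 1
  field_simp
  ring

theorem lintegral_Ioi_comp_sqrt_add_sqrt {c d : ℝ} (hc : 0 ≤ c) (hd : 0 ≤ d) (h : ℝ → ℝ≥0∞) :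
    ∫⁻ ρ in Ioi 0, ENNReal.ofReal (ρ / √(c + ρ ^ 2) + ρ / √(d + ρ ^ 2)) *
        h (√(c + ρ ^ 2) + √(d + ρ ^ 2)) = ∫⁻ u in Ioi (√c + √d), h u := by
  set φ : ℝ → ℝ := fun ρ => √(c + ρ ^ 2) + √(d + ρ ^ 2)
  have hφ0 : φ 0 = √c + √d := by simp [φ]
  have hmono : StrictMonoOn φ (Ici 0) := by
    intro ρ hρ σ hσ hlt
    have : ρ ^ 2 < σ ^ 2 := pow_lt_pow_left₀ hlt hρ two_ne_zero
    exact add_lt_add (sqrt_lt_sqrt (by positivity) (by linarith))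
      (sqrt_lt_sqrt (by positivity) (by linarith))
  have himage : φ '' Ioi 0 = Ioi (√c + √d) := by
    refine Subset.antisymm ?_ fun u hu => ?_
    · rintro _ ⟨ρ, hρ, rfl⟩
      exact hφ0 ▸ hmono self_mem_Ici (mem_Ici.2 (le_of_lt hρ)) hρ
    · have hu0 : 0 ≤ u := (add_nonneg (sqrt_nonneg c) (sqrt_nonneg d)).trans (le_of_lt hu)
      have hφu : u ≤ φ u := by
        calc u = √(u ^ 2) := (sqrt_sq hu0).symm
          _ ≤ φ u := le_add_of_le_of_nonneg (sqrt_le_sqrt (by linarith)) (sqrt_nonneg _)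
      obtain ⟨ρ, hρ, hρu⟩ := intermediate_value_Icc hu0 (by fun_prop)
        ⟨hφ0 ▸ le_of_lt hu, hφu⟩
      refine ⟨ρ, lt_of_le_of_ne hρ.1 ?_, hρu⟩
      rintro rfl
      exact (mem_Ioi.1 hu).ne (hφ0 ▸ hρu)
  have hderiv : ∀ ρ ∈ Ioi (0 : ℝ),
      HasDerivWithinAt φ (ρ / √(c + ρ ^ 2) + ρ / √(d + ρ ^ 2)) (Ioi 0) ρ := fun ρ hρ =>
    ((hasDerivAt_sqrt_add_sq hc hρ).add (hasDerivAt_sqrt_add_sq hd hρ)).hasDerivWithinAt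
  rw [← himage, lintegral_image_eq_lintegral_abs_deriv_mul measurableSet_Ioi hderiv
    (hmono.injOn.mono Ioi_subset_Ici_self)]
  refine setLIntegral_congr_fun measurableSet_Ioi fun ρ (hρ : 0 < ρ) => ?_
  rw [abs_of_nonneg (by positivity)]

theorem lintegral_Ioi_exp_neg_mul {k : ℝ} (hk : 0 < k) (b : ℝ) :
    ∫⁻ u in Ioi b, ENNReal.ofReal (exp (-k * u)) = ENNReal.ofReal (exp (-k * b) / k) := by
  rw [← ofReal_integral_eq_lintegral_ofReal (exp_neg_integrableOn_Ioi b hk)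
    (ae_of_all _ fun u => (exp_pos _).le), integral_exp_mul_Ioi (neg_neg_iff_pos.2 hk), neg_div,
    div_neg, neg_neg]

theorem lintegral_comp_sq_add_sq {g : ℝ → ℝ≥0∞} (hg : Measurable g) :
    ∫⁻ p : ℝ × ℝ, g (p.1 ^ 2 + p.2 ^ 2) =
      ENNReal.ofReal (2 * π) * ∫⁻ ρ in Ioi 0, ENNReal.ofReal ρ * g (ρ ^ 2) := by
  have hnorm : ∀ q : ℝ × ℝ, (polarCoord.symm q).1 ^ 2 + (polarCoord.symm q).2 ^ 2 = q.1 ^ 2 := by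
    intro q
    simp only [polarCoord_symm_apply, mul_pow, ← mul_add, cos_sq_add_sin_sq, mul_one]
  rw [← lintegral_comp_polarCoord_symm, polarCoord_target, Measure.volume_eq_prod,
    setLIntegral_prod _ (by fun_prop)]
  simp_rw [hnorm, smul_eq_mul, setLIntegral_const, Real.volume_Ioo,
    lintegral_mul_const' _ _ ENNReal.ofReal_ne_top]
  ring_nf

theorem lintegral_comp_norm_norm_sub_of_norm_eq {E : Type*} [NormedAddCommGroup E]
    [InnerProductSpace ℝ E] [FiniteDimensional ℝ E] [MeasurableSpace E] [BorelSpace E]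
    {a b : E} (hab : ‖a‖ = ‖b‖) (F : ℝ → ℝ → ℝ≥0∞) :
    ∫⁻ x, F ‖x‖ ‖x - a‖ = ∫⁻ x, F ‖x‖ ‖x - b‖ := by
  set R := Submodule.reflection (ℝ ∙ (a - b))ᗮ
  have hRa : R a = b := Submodule.reflection_sub hab
  conv_rhs => rw [← R.measurePreserving.lintegral_comp_emb R.toHomeomorph.measurableEmbedding]
  simp only [← hRa, ← map_sub, LinearIsometryEquiv.norm_map]

theorem EuclideanSpace.norm_fin_three (x : ℝ³) :
    ‖x‖ = √(x 0 ^ 2 + (x 1 ^ 2 + x 2 ^ 2)) := by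
  simp [EuclideanSpace.norm_eq, Fin.sum_univ_three, add_assoc]

theorem EuclideanSpace.lintegral_fin_three {g : ℝ × ℝ × ℝ → ℝ≥0∞} (hg : Measurable g) :
    ∫⁻ x : ℝ³, g (x 0, x 1, x 2) = ∫⁻ q, g q := by
  have := (((MeasurePreserving.id volume).prod (volume_preserving_finTwoArrow ℝ)).comp
    (volume_preserving_piFinSuccAbove (fun _ : Fin 3 => ℝ) 0)).comp
    (EuclideanSpace.volume_preserving_symm_measurableEquiv_toLp (Fin 3))
  rw [Measure.volume_eq_prod ℝ (ℝ × ℝ), ← this.lintegral_comp hg]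
  rfl

theorem lintegral_comp_norm_norm_sub_eq_cylindrical (a : ℝ³)
    {F : ℝ → ℝ → ℝ≥0∞} (hF : Measurable (Function.uncurry F)) :
    ∫⁻ x, F ‖x‖ ‖x - a‖ = ENNReal.ofReal (2 * π) *
      ∫⁻ z, ∫⁻ ρ in Ioi 0, ENNReal.ofReal ρ * F √(z ^ 2 + ρ ^ 2) √((z - ‖a‖) ^ 2 + ρ ^ 2) := by
  set b := ‖a‖
  set g : ℝ × ℝ → ℝ≥0∞ := fun q => F √(q.1 ^ 2 + q.2) √((q.1 - b) ^ 2 + q.2)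
  have hg : Measurable g :=
    hF.comp (f := fun q : ℝ × ℝ => (√(q.1 ^ 2 + q.2), √((q.1 - b) ^ 2 + q.2))) (by fun_prop)
  calc ∫⁻ x, F ‖x‖ ‖x - a‖
      = ∫⁻ x : ℝ³, g (x 0, x 1 ^ 2 + x 2 ^ 2) := by
        rw [lintegral_comp_norm_norm_sub_of_norm_eq (b := EuclideanSpace.single 0 b) (by simp [b])]
        simp [g, EuclideanSpace.norm_fin_three]
    _ = ∫⁻ z, ∫⁻ p : ℝ × ℝ, g (z, p.1 ^ 2 + p.2 ^ 2) := by
        rw [EuclideanSpace.lintegral_fin_three (g := fun q => g (q.1, q.2.1 ^ 2 + q.2.2 ^ 2))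
          (by fun_prop), Measure.volume_eq_prod, lintegral_prod _ (by fun_prop)]
    _ = ∫⁻ z, ENNReal.ofReal (2 * π) * ∫⁻ ρ in Ioi 0, ENNReal.ofReal ρ * g (z, ρ ^ 2) :=
        lintegral_congr fun z => lintegral_comp_sq_add_sq (hg.comp measurable_prodMk_left)
    _ = _ := lintegral_const_mul' _ _ ENNReal.ofReal_ne_top

theorem lintegral_inv_norm_mul_norm_sub_mul_comp_add (a : ℝ³)
    {h : ℝ → ℝ≥0∞} (hh : Measurable h) :
    ∫⁻ x, ENNReal.ofReal (‖x‖ * ‖x - a‖)⁻¹ * h (‖x‖ + ‖x - a‖) =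
      ENNReal.ofReal (2 * π) * ∫⁻ u in Ioi ‖a‖, h u := by
  rw [lintegral_comp_norm_norm_sub_eq_cylindrical a
    (F := fun r s => ENNReal.ofReal (r * s)⁻¹ * h (r + s)) (by fun_prop)]
  congr 1
  calc _ = ∫⁻ z, ∫⁻ u in Ioi (|z| + |z - ‖a‖|), ENNReal.ofReal u⁻¹ * h u := by
        refine lintegral_congr fun z => ?_
        rw [← sqrt_sq_eq_abs, ← sqrt_sq_eq_abs,
          ← lintegral_Ioi_comp_sqrt_add_sqrt (sq_nonneg z) (sq_nonneg _)]
        refine setLIntegral_congr_fun measurableSet_Ioi fun ρ (hρ : 0 < ρ) => ?_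
        have hr : 0 < √(z ^ 2 + ρ ^ 2) := sqrt_pos.2 (by positivity)
        have hs : 0 < √((z - ‖a‖) ^ 2 + ρ ^ 2) := sqrt_pos.2 (by positivity)
        -- `ρ / (r s) = (ρ / r + ρ / s) / (r + s)`: the Jacobian of `ρ ↦ r + s` appears.
        rw [← mul_assoc, ← mul_assoc, ← ENNReal.ofReal_mul hρ.le,
          ← ENNReal.ofReal_mul (by positivity)]
        congr 2
        field_simp
        ring
    _ = ∫⁻ u in Ioi ‖a‖, ENNReal.ofReal u * (ENNReal.ofReal u⁻¹ * h u) :=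
        lintegral_lintegral_Ioi_abs_add_abs_sub (norm_nonneg a) (by fun_prop)
    _ = ∫⁻ u in Ioi ‖a‖, h u := by
        refine setLIntegral_congr_fun measurableSet_Ioi fun u (hu : ‖a‖ < u) => ?_
        have hu0 : 0 < u := (norm_nonneg a).trans_lt hu
        rw [← mul_assoc, ← ENNReal.ofReal_mul hu0.le, mul_inv_cancel₀ hu0.ne', ENNReal.ofReal_one,
          one_mul]

noncomputable def yukawa {E : Type*} [NormedAddCommGroup E] (k : ℝ) (x : E) : ℝ :=
  exp (-k * ‖x‖) / ‖x‖

section Yukawa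

variable {E : Type*} [NormedAddCommGroup E] (k : ℝ)

theorem yukawa_nonneg (x : E) : 0 ≤ yukawa k x := by unfold yukawa; positivity

@[fun_prop]
theorem measurable_yukawa [MeasurableSpace E] [OpensMeasurableSpace E] :
    Measurable (yukawa k : E → ℝ) := by unfold yukawa; fun_prop

theorem yukawa_sub_mul_yukawa (x a : E) :
    yukawa k (x - a) * yukawa k x = (‖x‖ * ‖x - a‖)⁻¹ * exp (-k * (‖x‖ + ‖x - a‖)) := by
  simp only [yukawa, div_eq_mul_inv, mul_add, exp_add, mul_inv]
  ring

end Yukawa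

theorem lintegral_yukawa_sub_mul_yukawa {k : ℝ} (hk : 0 < k) (a : ℝ³) :
    ∫⁻ x, ENNReal.ofReal (yukawa k (x - a) * yukawa k x) =
      ENNReal.ofReal (2 * π * exp (-k * ‖a‖) / k) := by
  simp_rw [yukawa_sub_mul_yukawa,
    ENNReal.ofReal_mul (inv_nonneg.2 (mul_nonneg (norm_nonneg _) (norm_nonneg _)))]
  rw [lintegral_inv_norm_mul_norm_sub_mul_comp_add a (h := fun u => ENNReal.ofReal (exp (-k * u)))
    (by fun_prop), lintegral_Ioi_exp_neg_mul hk, ← ENNReal.ofReal_mul (by positivity),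
    mul_div_assoc]

theorem lintegral_yukawa_sq {k : ℝ} (hk : 0 < k) :
    ∫⁻ x : ℝ³, ENNReal.ofReal (yukawa k x ^ 2) = ENNReal.ofReal (2 * π / k) := by
  simpa [sq] using lintegral_yukawa_sub_mul_yukawa hk 0

theorem lintegral_yukawa_sub_sub_yukawa_sq {k : ℝ} (hk : 0 < k) (a : ℝ³) :
    ∫⁻ x, ENNReal.ofReal ((yukawa k (x - a) - yukawa k x) ^ 2) =
      ENNReal.ofReal (4 * π * (1 - exp (-k * ‖a‖)) / k) := by
  -- `(A - B)² + 2AB = A² + B²`, kept free of subtraction since the integrals live in `ℝ≥0∞`.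
  have hexpand : ∀ x, ENNReal.ofReal ((yukawa k (x - a) - yukawa k x) ^ 2) +
      (ENNReal.ofReal (yukawa k (x - a) * yukawa k x) +
        ENNReal.ofReal (yukawa k (x - a) * yukawa k x)) =
      ENNReal.ofReal (yukawa k (x - a) ^ 2) + ENNReal.ofReal (yukawa k x ^ 2) := fun x => by
    have hAB := mul_nonneg (yukawa_nonneg k (x - a)) (yukawa_nonneg k x)
    rw [← ENNReal.ofReal_add hAB hAB, ← ENNReal.ofReal_add (sq_nonneg _) (add_nonneg hAB hAB),
      ← ENNReal.ofReal_add (sq_nonneg _) (sq_nonneg _)]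
    ring_nf
  have hsum := lintegral_congr (μ := volume) hexpand
  rw [lintegral_add_left (by fun_prop), lintegral_add_left (by fun_prop),
    lintegral_add_left (by fun_prop), lintegral_yukawa_sub_mul_yukawa hk,
    lintegral_sub_right_eq_self (fun x => ENNReal.ofReal (yukawa k x ^ 2)) a,
    lintegral_yukawa_sq hk] at hsum
  rw [ENNReal.eq_sub_of_add_eq (by simp) hsum, ← ENNReal.ofReal_add (by positivity) (by positivity),
    ← ENNReal.ofReal_add (by positivity) (by positivity), ← ENNReal.ofReal_sub _ (by positivity)]
  ring_nf

theorem lintegral_yukawa_sub_sub_yukawa_sq_le {k : ℝ} (hk : 0 < k) (a : ℝ³) :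
    ∫⁻ x, ENNReal.ofReal ((yukawa k (x - a) - yukawa k x) ^ 2) ≤
      ENNReal.ofReal (2 * π * (1 + ‖a‖ ^ 2)) := by
  rw [lintegral_yukawa_sub_sub_yukawa_sq hk]
  refine ENNReal.ofReal_le_ofReal ((div_le_iff₀ hk).2 ?_)
  have h1 : 1 - exp (-k * ‖a‖) ≤ k * ‖a‖ := by linarith [add_one_le_exp (-k * ‖a‖)]
  have h2 : 2 * ‖a‖ ≤ 1 + ‖a‖ ^ 2 := by nlinarith [sq_nonneg (1 - ‖a‖)]
  calc 4 * π * (1 - exp (-k * ‖a‖)) ≤ 4 * π * (k * ‖a‖) := by gcongr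
    _ = 2 * π * k * (2 * ‖a‖) := by ring
    _ ≤ 2 * π * k * (1 + ‖a‖ ^ 2) := by gcongr
    _ = 2 * π * (1 + ‖a‖ ^ 2) * k := by ring

theorem lintegral_lintegral_yukawa_sub_sub_yukawa_sq_mul_le {k : ℝ} (hk : 0 < k)
    {u : ℝ³ → ℝ} (hu : Measurable u) (hu_nonneg : ∀ x, 0 ≤ u x)
    (hu_int : Integrable u) (hu_int' : Integrable fun x => ‖x‖ ^ 2 * u x) :
    ∫⁻ x, ∫⁻ x', ENNReal.ofReal ((yukawa k (x - x') - yukawa k x) ^ 2) * ENNReal.ofReal (u x') ≤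
      ENNReal.ofReal (2 * π * ((∫ x, u x) + ∫ x, ‖x‖ ^ 2 * u x)) := by
  rw [← integral_add hu_int hu_int', ← integral_const_mul,
    ofReal_integral_eq_lintegral_ofReal (f := fun x => 2 * π * (u x + ‖x‖ ^ 2 * u x))
      ((hu_int.add hu_int').const_mul _)
      (ae_of_all _ fun x => by have := hu_nonneg x; positivity),
    lintegral_lintegral_swap (by fun_prop)]
  refine lintegral_mono fun x' => ?_
  rw [lintegral_mul_const' _ _ ENNReal.ofReal_ne_top]
  calc _ ≤ ENNReal.ofReal (2 * π * (1 + ‖x'‖ ^ 2)) * ENNReal.ofReal (u x') := by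
        gcongr; exact lintegral_yukawa_sub_sub_yukawa_sq_le hk x'
    _ = _ := by rw [← ENNReal.ofReal_mul (by positivity)]; ring_nf

theorem integral_norm_sq_le_of_lintegral_enorm_sq_le {α E : Type*} [MeasurableSpace α]
    {μ : Measure α} [NormedAddCommGroup E] {F : α → E} (hF : AEStronglyMeasurable F μ) {C : ℝ}
    (hC : 0 ≤ C) (h : ∫⁻ x, ‖F x‖ₑ ^ 2 ∂μ ≤ ENNReal.ofReal C) : ∫ x, ‖F x‖ ^ 2 ∂μ ≤ C := by
  rw [integral_eq_lintegral_of_nonneg_ae (f := fun x => ‖F x‖ ^ 2)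
    (ae_of_all _ fun _ => by positivity) (hF.norm.pow 2)]
  simp only [ENNReal.ofReal_pow, norm_nonneg, ofReal_norm]
  exact ENNReal.toReal_le_of_le_ofReal hC h

theorem sq_lintegral_enorm_mul_le_weighted {α E F : Type*} [MeasurableSpace α] {μ : Measure α}
    [NormedAddCommGroup E] [NormedAddCommGroup F] {f : α → E} {g : α → F} {w : α → ℝ}
    (hf : AEStronglyMeasurable f μ) (hg : AEStronglyMeasurable g μ) (hw : Measurable w)
    (hw_pos : ∀ x, 0 < w x) :
    (∫⁻ x, ‖f x‖ₑ * ‖g x‖ₑ ∂μ) ^ 2 ≤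
      (∫⁻ x, ENNReal.ofReal (w x * ‖f x‖ ^ 2) ∂μ) *
        ∫⁻ x, ENNReal.ofReal ((w x)⁻¹ * ‖g x‖ ^ 2) ∂μ := by
  set F₁ := fun x => ENNReal.ofReal (√(w x) * ‖f x‖)
  set F₂ := fun x => ENNReal.ofReal (‖g x‖ / √(w x))
  have hsqrt : ∀ x, 0 < √(w x) := fun x => sqrt_pos.2 (hw_pos x)
  have hsq : ∀ t : ℝ, 0 ≤ t → ENNReal.ofReal t ^ (2 : ℝ) = ENNReal.ofReal (t ^ 2) := fun t ht => by
    rw [ENNReal.ofReal_rpow_of_nonneg ht zero_le_two, rpow_two]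
  have hF₁ : ∀ x, F₁ x ^ (2 : ℝ) = ENNReal.ofReal (w x * ‖f x‖ ^ 2) := fun x => by
    rw [hsq _ (by positivity), mul_pow, sq_sqrt (hw_pos x).le]
  have hF₂ : ∀ x, F₂ x ^ (2 : ℝ) = ENNReal.ofReal ((w x)⁻¹ * ‖g x‖ ^ 2) := fun x => by
    rw [hsq _ (by positivity), div_pow, sq_sqrt (hw_pos x).le, inv_mul_eq_div]
  have hF₁₂ : ∀ x, F₁ x * F₂ x = ‖f x‖ₑ * ‖g x‖ₑ := fun x => by
    rw [← ENNReal.ofReal_mul (by positivity), ← ofReal_norm, ← ofReal_norm,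
      ← ENNReal.ofReal_mul (norm_nonneg _)]
    congr 1
    field_simp [(hsqrt x).ne']
  have hHolder := ENNReal.lintegral_mul_le_Lp_mul_Lq μ Real.HolderConjugate.two_two
    (f := F₁) (g := F₂)
    (ENNReal.measurable_ofReal.comp_aemeasurable (hw.sqrt.aemeasurable.mul hf.norm.aemeasurable))
    (ENNReal.measurable_ofReal.comp_aemeasurable (hg.norm.aemeasurable.div hw.sqrt.aemeasurable))
  simp only [Pi.mul_apply, hF₁₂, hF₁, hF₂] at hHolder
  calc (∫⁻ x, ‖f x‖ₑ * ‖g x‖ₑ ∂μ) ^ 2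
      ≤ ((∫⁻ x, ENNReal.ofReal (w x * ‖f x‖ ^ 2) ∂μ) ^ (1 / 2 : ℝ) *
          (∫⁻ x, ENNReal.ofReal ((w x)⁻¹ * ‖g x‖ ^ 2) ∂μ) ^ (1 / 2 : ℝ)) ^ 2 := by gcongr
    _ = _ := by
        rw [mul_pow, ← ENNReal.rpow_natCast, ← ENNReal.rpow_natCast, ← ENNReal.rpow_mul,
          ← ENNReal.rpow_mul]
        norm_num

theorem enorm_integral_mul_sub_sq_le {α : Type*} [MeasurableSpace α] {μ : Measure α}
    {G v w : α → ℝ} {ψ : α → ℂ} (G₀ : ℝ) (hG : Measurable G) (hv : Measurable v)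
    (hψ : AEStronglyMeasurable ψ μ) (hw : Measurable w) (hw_pos : ∀ x, 0 < w x)
    (hvψ : Integrable (fun x => (v x : ℂ) * ψ x) μ)
    (hψ_norm : ∫ x, (w x)⁻¹ * ‖ψ x‖ ^ 2 ∂μ = 1)
    (hfin : ∫⁻ x, ENNReal.ofReal ((G x - G₀) ^ 2) * ENNReal.ofReal (w x * v x ^ 2) ∂μ ≠ ∞) :
    ‖∫ x, (G x : ℂ) * v x * ψ x ∂μ - G₀ * ∫ x, (v x : ℂ) * ψ x ∂μ‖ₑ ^ 2 ≤
      ∫⁻ x, ENNReal.ofReal ((G x - G₀) ^ 2) * ENNReal.ofReal (w x * v x ^ 2) ∂μ := by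
  have hψw : ∫⁻ x, ENNReal.ofReal ((w x)⁻¹ * ‖ψ x‖ ^ 2) ∂μ = 1 := by
    rw [← ofReal_integral_eq_lintegral_ofReal (.of_integral_ne_zero (hψ_norm ▸ one_ne_zero))
      (ae_of_all _ fun x => by have := hw_pos x; positivity), hψ_norm, ENNReal.ofReal_one]
  set K : α → ℂ := fun x => ((G x - G₀) * v x : ℝ)
  have hK : AEStronglyMeasurable K μ := by fun_prop
  have hCS := sq_lintegral_enorm_mul_le_weighted hK hψ hw hw_pos
  have hKw : ∀ x, ENNReal.ofReal (w x * ‖K x‖ ^ 2) =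
      ENNReal.ofReal ((G x - G₀) ^ 2) * ENNReal.ofReal (w x * v x ^ 2) := fun x => by
    rw [← ENNReal.ofReal_mul (sq_nonneg _), Complex.norm_real, Real.norm_eq_abs, sq_abs]
    ring_nf
  simp only [hKw, hψw, mul_one] at hCS
  have hKψ : Integrable (fun x => K x * ψ x) μ := by
    refine ⟨hK.mul hψ, ?_⟩
    simp only [HasFiniteIntegral, enorm_mul]
    exact (ENNReal.pow_lt_top_iff.1 (hCS.trans_lt hfin.lt_top)).resolve_right two_ne_zero
  have hsplit : ∫ x, (G x : ℂ) * v x * ψ x ∂μ - G₀ * ∫ x, (v x : ℂ) * ψ x ∂μ =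
      ∫ x, K x * ψ x ∂μ := by
    have hG : ∀ x, (G x : ℂ) * v x * ψ x = K x * ψ x + G₀ * ((v x : ℂ) * ψ x) := fun x => by
      simp only [K, Complex.ofReal_mul, Complex.ofReal_sub]
      ring
    simp_rw [hG]
    rw [integral_add hKψ (hvψ.const_mul _), integral_const_mul, add_sub_cancel_right]
  rw [hsplit]
  calc ‖∫ x, K x * ψ x ∂μ‖ₑ ^ 2 ≤ (∫⁻ x, ‖K x * ψ x‖ₑ ∂μ) ^ 2 := by
        gcongr; exact enorm_integral_le_lintegral_enorm _
    _ ≤ _ := by simpa only [enorm_mul] using hCS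

theorem stmt_5_general (δ lam k : ℝ) (hk : 0 < k)
    (v : EuclideanSpace ℝ (Fin 3) → ℝ) (hv : Measurable v)
    (hv1 : Integrable (fun x : EuclideanSpace ℝ (Fin 3) =>
      ‖x‖ ^ 2 * (1 + ‖x‖ ^ δ) * (v x) ^ 2))
    (hv2 : Integrable (fun x : EuclideanSpace ℝ (Fin 3) =>
      (1 + ‖x‖ ^ δ) * (v x) ^ 2))
    (γ : ℝ)
    (hγ : γ = max (∫ x : EuclideanSpace ℝ (Fin 3), ‖x‖ ^ 2 * (1 + ‖x‖ ^ δ) * (v x) ^ 2)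
                  (∫ x : EuclideanSpace ℝ (Fin 3), (1 + ‖x‖ ^ δ) * (v x) ^ 2))
    (ψ : EuclideanSpace ℝ (Fin 3) → ℂ) (hψL2 : MemLp ψ 2)
    (hψnorm : ∫ x : EuclideanSpace ℝ (Fin 3), (1 + ‖x‖ ^ δ)⁻¹ * ‖ψ x‖ ^ 2 = 1)
    (hvψ : Integrable (fun x : EuclideanSpace ℝ (Fin 3) => (v x : ℂ) * ψ x))
    (heq : ∀ᵐ x : EuclideanSpace ℝ (Fin 3),
      ψ x = (lam / (4 * π)) * ∫ x' : EuclideanSpace ℝ (Fin 3),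
        ((Real.exp (-k * ‖x - x'‖) / ‖x - x'‖ : ℝ) : ℂ) * (v x' : ℂ) * ψ x')
    (f : EuclideanSpace ℝ (Fin 3) → ℂ)
    (hf : f = fun x : EuclideanSpace ℝ (Fin 3) =>
      (lam / (4 * π)) * ((Real.exp (-k * ‖x‖) / ‖x‖ : ℝ) : ℂ) *
        ∫ x' : EuclideanSpace ℝ (Fin 3), (v x' : ℂ) * ψ x') :
    ∫ x : EuclideanSpace ℝ (Fin 3), ‖ψ x - f x‖ ^ 2 ≤ lam ^ 2 * γ / (2 * π) := by
  set c : ℂ := lam / (4 * π)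
  set w : ℝ³ → ℝ := fun x => 1 + ‖x‖ ^ δ
  have hw_pos : ∀ x, 0 < w x := fun x => by positivity
  set Q : ℝ³ → ℝ≥0∞ := fun x => ∫⁻ x',
    ENNReal.ofReal ((yukawa k (x - x') - yukawa k x) ^ 2) * ENNReal.ofReal (w x' * v x' ^ 2)
  have hγ_nonneg : 0 ≤ γ := hγ ▸ (integral_nonneg fun x => by positivity).trans (le_max_right _ _)
  have hQ : ∫⁻ x, Q x ≤ ENNReal.ofReal (4 * π * γ) := by
    refine (lintegral_lintegral_yukawa_sub_sub_yukawa_sq_mul_le hk (by fun_prop)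
      (fun x => by positivity) hv2 (by simpa only [mul_assoc] using hv1)).trans
      (ENNReal.ofReal_le_ofReal ?_)
    have h₁ : ∫ x, ‖x‖ ^ 2 * (w x * v x ^ 2) ≤ γ := by
      rw [hγ]; simpa only [mul_assoc] using le_max_left _ _
    have h₂ : ∫ x, w x * v x ^ 2 ≤ γ := hγ ▸ le_max_right _ _
    nlinarith [pi_pos]
  have hpt : ∀ᵐ x, ‖ψ x - f x‖ₑ ^ 2 ≤ ENNReal.ofReal (‖c‖ ^ 2) * Q x := by
    filter_upwards [heq, ae_lt_top (by fun_prop) (hQ.trans_lt ENNReal.ofReal_lt_top).ne]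
      with x hx hQx
    have hdiff : ψ x - f x = c * ((∫ x', (yukawa k (x - x') : ℂ) * v x' * ψ x') -
        yukawa k x * ∫ x', (v x' : ℂ) * ψ x') := by
      rw [hx, hf]; simp only [yukawa]; ring
    rw [hdiff, enorm_mul, mul_pow, ENNReal.ofReal_pow (norm_nonneg _), ofReal_norm]
    exact mul_le_mul_right (enorm_integral_mul_sub_sq_le (yukawa k x) (by fun_prop) hv hψL2.1
      (by fun_prop) hw_pos hvψ hψnorm hQx.ne) _
  have hc : ‖c‖ ^ 2 * (4 * π * γ) ≤ lam ^ 2 * γ / (2 * π) := by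
    rw [show ‖c‖ = |lam| / (4 * π) by simp [c, abs_of_pos pi_pos], div_pow, sq_abs]
    field_simp
    nlinarith [pi_pos, sq_nonneg lam]
  have hf_meas : Measurable f := hf ▸
    (measurable_const.mul (Complex.measurable_ofReal.comp (measurable_yukawa k))).mul_const _
  refine integral_norm_sq_le_of_lintegral_enorm_sq_le (hψL2.1.sub hf_meas.aestronglyMeasurable)
    (by positivity) ?_ |>.trans hc
  calc ∫⁻ x, ‖ψ x - f x‖ₑ ^ 2 ≤ ∫⁻ x, ENNReal.ofReal (‖c‖ ^ 2) * Q x := lintegral_mono_ae hpt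
    _ ≤ ENNReal.ofReal (‖c‖ ^ 2) * ENNReal.ofReal (4 * π * γ) := by
      rw [lintegral_const_mul' _ _ ENNReal.ofReal_ne_top]; gcongr
    _ = _ := (ENNReal.ofReal_mul (by positivity)).symm

theorem stmt_5 (δ lam k : ℝ) (hδ : δ ∈ Set.Ioo (0 : ℝ) 1) (hlam : 0 < lam) (hk : 0 < k)
    (v : EuclideanSpace ℝ (Fin 3) → ℝ) (hv : Measurable v)
    (hv1 : Integrable (fun x : EuclideanSpace ℝ (Fin 3) =>
      ‖x‖ ^ 2 * (1 + ‖x‖ ^ δ) * (v x) ^ 2))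
    (hv2 : Integrable (fun x : EuclideanSpace ℝ (Fin 3) =>
      (1 + ‖x‖ ^ δ) * (v x) ^ 2))
    (γ : ℝ)
    (hγ : γ = max (∫ x : EuclideanSpace ℝ (Fin 3), ‖x‖ ^ 2 * (1 + ‖x‖ ^ δ) * (v x) ^ 2)
                  (∫ x : EuclideanSpace ℝ (Fin 3), (1 + ‖x‖ ^ δ) * (v x) ^ 2))
    (ψ : EuclideanSpace ℝ (Fin 3) → ℂ) (hψL2 : MemLp ψ 2)
    (hψnorm : ∫ x : EuclideanSpace ℝ (Fin 3), (1 + ‖x‖ ^ δ)⁻¹ * ‖ψ x‖ ^ 2 = 1)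
    (hvψ : Integrable (fun x : EuclideanSpace ℝ (Fin 3) => (v x : ℂ) * ψ x))
    (heq : ∀ᵐ x : EuclideanSpace ℝ (Fin 3),
      ψ x = (lam / (4 * π)) * ∫ x' : EuclideanSpace ℝ (Fin 3),
        ((Real.exp (-k * ‖x - x'‖) / ‖x - x'‖ : ℝ) : ℂ) * (v x' : ℂ) * ψ x')
    (f : EuclideanSpace ℝ (Fin 3) → ℂ)
    (hf : f = fun x : EuclideanSpace ℝ (Fin 3) =>
      (lam / (4 * π)) * ((Real.exp (-k * ‖x‖) / ‖x‖ : ℝ) : ℂ) *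
        ∫ x' : EuclideanSpace ℝ (Fin 3), (v x' : ℂ) * ψ x') :
    ∫ x : EuclideanSpace ℝ (Fin 3), ‖ψ x - f x‖ ^ 2 ≤ lam ^ 2 * γ / (2 * π) :=
  stmt_5_general δ lam k hk v hv hv1 hv2 γ hγ ψ hψL2 hψnorm hvψ heq f hf
end

section
/- For every θ ∈ (0, π/2): lim_{k → 0⁺} (1 / ln(1/k)) ∫_{k sin θ}^{∞} ( e^{-2t cot θ} / t ) sin²(θ + t) dt = sin² θ. -/
/-!
Since `e^{-2t cot θ} sin²(θ + t) = sin² θ + O(t)` as `t → 0⁺`, the integrand is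
`sin² θ / t + O(1)` on `(0, 1]`, while its integral over `(1, ∞)` converges. Hence the integral
from `a = k sin θ` equals `sin² θ · log (1 / a) + O(1) = sin² θ · log (1 / k) + O(1)`, and dividing
by `log (1 / k) → ∞` leaves `sin² θ`.
-/

open MeasureTheory Real Filter Set Topology

theorem Real.abs_sin_sq_sub_sin_sq_le (x y : ℝ) : |sin x ^ 2 - sin y ^ 2| ≤ 2 * |x - y| := by
  have hsum : |sin x + sin y| ≤ 2 :=
    (abs_add_le _ _).trans (by linarith [abs_sin_le_one x, abs_sin_le_one y])
  calc |sin x ^ 2 - sin y ^ 2| = |sin x - sin y| * |sin x + sin y| := by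
        rw [← abs_mul]; ring_nf
    _ ≤ |x - y| * 2 := mul_le_mul (abs_sin_sub_sin_le x y) hsum (abs_nonneg _) (abs_nonneg _)
    _ = 2 * |x - y| := mul_comm _ _

theorem abs_exp_mul_sin_sq_sub_sin_sq_le {c t : ℝ} (θ : ℝ) (hc : 0 ≤ c) (ht : 0 ≤ t) :
    |exp (-2 * t * c) * sin (θ + t) ^ 2 - sin θ ^ 2| ≤ (2 + 2 * c) * t := by
  set E := exp (-2 * t * c)
  have hE : E ≤ 1 := exp_le_one_iff.mpr (by nlinarith)
  have hE' : 1 - E ≤ 2 * t * c := by linarith [add_one_le_exp (-2 * t * c)]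
  have hsin : |sin (θ + t) ^ 2 - sin θ ^ 2| ≤ 2 * t := by
    simpa [abs_of_nonneg ht] using abs_sin_sq_sub_sin_sq_le (θ + t) θ
  calc |E * sin (θ + t) ^ 2 - sin θ ^ 2|
      = |E * (sin (θ + t) ^ 2 - sin θ ^ 2) - (1 - E) * sin θ ^ 2| := by ring_nf
    _ ≤ |E * (sin (θ + t) ^ 2 - sin θ ^ 2)| + |(1 - E) * sin θ ^ 2| := abs_sub _ _
    _ ≤ 1 * (2 * t) + 2 * t * c * 1 := by
        rw [abs_mul, abs_mul, abs_of_pos (exp_pos _), abs_of_nonneg (sub_nonneg.2 hE),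
          abs_of_nonneg (sq_nonneg (sin θ))]
        exact add_le_add (mul_le_mul hE hsin (abs_nonneg _) zero_le_one)
          (mul_le_mul hE' (sin_sq_le_one θ) (sq_nonneg _) (by positivity))
    _ = (2 + 2 * c) * t := by ring

theorem abs_exp_div_mul_sin_sq_sub_sin_sq_div_le {c t : ℝ} (θ : ℝ) (hc : 0 ≤ c) (ht : 0 < t) :
    |exp (-2 * t * c) / t * sin (θ + t) ^ 2 - sin θ ^ 2 / t| ≤ 2 + 2 * c := by
  rw [div_mul_eq_mul_div, ← sub_div, abs_div, abs_of_pos ht, div_le_iff₀ ht]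
  exact abs_exp_mul_sin_sq_sub_sin_sq_le θ hc ht.le

theorem integrableOn_Ioi_exp_div_mul_sin_sq {a c : ℝ} (θ : ℝ) (ha : 0 < a) (hc : 0 < c) :
    IntegrableOn (fun t => exp (-2 * t * c) / t * sin (θ + t) ^ 2) (Ioi a) := by
  refine ((exp_neg_integrableOn_Ioi a (by positivity : 0 < 2 * c)).const_mul a⁻¹).mono'
    (by fun_prop : Measurable _).aestronglyMeasurable
    (ae_restrict_of_forall_mem measurableSet_Ioi fun t (ht : a < t) => ?_)
  have ht0 : 0 < t := ha.trans ht
  rw [norm_of_nonneg (by positivity), show -(2 * c) * t = -2 * t * c by ring, div_eq_inv_mul,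
    mul_comm a⁻¹]
  calc t⁻¹ * exp (-2 * t * c) * sin (θ + t) ^ 2 ≤ t⁻¹ * exp (-2 * t * c) * 1 := by
        gcongr; exact sin_sq_le_one _
    _ ≤ exp (-2 * t * c) * a⁻¹ := by
        rw [mul_one, mul_comm]; gcongr

theorem abs_setIntegral_Ioi_sub_mul_log_le {g : ℝ → ℝ} {L B a : ℝ} (ha : 0 < a) (ha1 : a ≤ 1)
    (hg : IntegrableOn g (Ioi a)) (hB : ∀ t ∈ Ioc 0 1, |g t - L / t| ≤ B) :
    |(∫ t in Ioi a, g t) - L * log (1 / a)| ≤ B + |∫ t in Ioi 1, g t| := by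
  have hg1 : IntegrableOn g (Ioi 1) := hg.mono_set (Ioi_subset_Ioi ha1)
  have hg_int : IntervalIntegrable g volume a 1 :=
    (intervalIntegrable_iff_integrableOn_Ioc_of_le ha1).2 (hg.mono_set Ioc_subset_Ioi_self)
  have hpole_int : IntervalIntegrable (fun t => L / t) volume a 1 := by
    refine (continuousOn_const.div continuousOn_id fun t ht => ?_).intervalIntegrable
    rw [uIcc_of_le ha1] at ht
    exact (ha.trans_le ht.1).ne'
  have hpole : ∫ t in a..1, L / t = L * log (1 / a) := by
    simp_rw [div_eq_mul_inv L]
    rw [intervalIntegral.integral_const_mul, integral_inv_of_pos ha one_pos]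
  have herr : |∫ t in a..1, (g t - L / t)| ≤ B := by
    have hB0 : 0 ≤ B := (abs_nonneg _).trans (hB 1 ⟨one_pos, le_rfl⟩)
    refine (intervalIntegral.norm_integral_le_of_norm_le_const
      (C := B) (f := fun t => g t - L / t) fun t ht => ?_).trans ?_
    · rw [uIoc_of_le ha1] at ht
      exact hB t ⟨ha.trans ht.1, ht.2⟩
    · rw [abs_of_nonneg (sub_nonneg.2 ha1)]
      nlinarith
  rw [intervalIntegral.integral_sub hg_int hpole_int, hpole] at herr
  rw [← intervalIntegral.integral_interval_add_Ioi hg hg1]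
  calc |(∫ t in a..1, g t) + (∫ t in Ioi 1, g t) - L * log (1 / a)|
      = |((∫ t in a..1, g t) - L * log (1 / a)) + ∫ t in Ioi 1, g t| := by ring_nf
    _ ≤ B + |∫ t in Ioi 1, g t| := (abs_add_le _ _).trans (by linarith)

theorem tendsto_one_div_mul_of_abs_sub_mul_le {α : Type*} {l : Filter α} {F ℓ : α → ℝ}
    {L M : ℝ}
    (hℓ : Tendsto ℓ l atTop) (hF : ∀ᶠ x in l, |F x - L * ℓ x| ≤ M) :
    Tendsto (fun x => 1 / ℓ x * F x) l (𝓝 L) := by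
  rw [← tendsto_sub_nhds_zero_iff]
  refine squeeze_zero_norm' ?_ ((tendsto_const_nhds (x := M)).div_atTop hℓ)
  filter_upwards [hF, hℓ.eventually_gt_atTop 0] with x hx hpos
  rw [show 1 / ℓ x * F x - L = (F x - L * ℓ x) / ℓ x by field_simp, norm_div,
    norm_of_nonneg hpos.le, Real.norm_eq_abs]
  exact div_le_div_of_nonneg_right hx hpos.le

theorem Real.tendsto_log_one_div_nhdsGT_zero : Tendsto (fun k => log (1 / k)) (𝓝[>] 0) atTop := by
  refine (tendsto_neg_atBot_atTop.comp tendsto_log_nhdsGT_zero).congr fun k => ?_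
  simp [log_inv]

theorem stmt_12 (θ : ℝ) (hθ : θ ∈ Set.Ioo 0 (π / 2)) :
    Tendsto (fun k : ℝ =>
        (1 / Real.log (1 / k)) *
          ∫ t in Set.Ioi (k * Real.sin θ),
            Real.exp (-2 * t * (Real.cos θ / Real.sin θ)) / t * Real.sin (θ + t) ^ 2)
      (nhdsWithin 0 (Set.Ioi 0)) (nhds (Real.sin θ ^ 2)) := by
  obtain ⟨hθ0, hθ2⟩ := hθ
  have hs : 0 < sin θ := sin_pos_of_pos_of_lt_pi hθ0 (by linarith [pi_pos])
  have hc : 0 < cos θ / sin θ := div_pos (cos_pos_of_mem_Ioo ⟨by linarith [pi_pos], hθ2⟩) hs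
  refine tendsto_one_div_mul_of_abs_sub_mul_le
    (M := 2 + 2 * (cos θ / sin θ) +
      |∫ t in Ioi 1, exp (-2 * t * (cos θ / sin θ)) / t * sin (θ + t) ^ 2| +
      |sin θ ^ 2 * log (sin θ)|)
    tendsto_log_one_div_nhdsGT_zero ?_
  filter_upwards [Ioo_mem_nhdsGT one_pos] with k ⟨hk0, hk1⟩
  have hbound := abs_setIntegral_Ioi_sub_mul_log_le (mul_pos hk0 hs)
    (by nlinarith [sin_le_one θ]) (integrableOn_Ioi_exp_div_mul_sin_sq θ (mul_pos hk0 hs) hc)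
    fun t ht => abs_exp_div_mul_sin_sq_sub_sin_sq_div_le θ hc.le ht.1
  have hlog : log (1 / (k * sin θ)) = log (1 / k) - log (sin θ) := by
    rw [one_div, log_inv, log_mul hk0.ne' hs.ne', one_div, log_inv]; ring
  rw [hlog] at hbound
  refine (abs_sub_le _ (sin θ ^ 2 * (log (1 / k) - log (sin θ))) _).trans ?_
  rw [show sin θ ^ 2 * (log (1 / k) - log (sin θ)) - sin θ ^ 2 * log (1 / k)
    = -(sin θ ^ 2 * log (sin θ)) by ring, abs_neg]
  linarith
end

section
/- Let x, y ∈ ℝ³ be nonzero and let k ∈ (0,1). Then (√2/(4π)) · (2π)^{-3/2} ∫_{ℝ³} e^{i p·y} χ_{[k,1]}(|p|) e^{-|p| |x|} / (|x| |p|) dp = (1 / (2 π^{3/2})) · (1 / (|x| |y| (|x|² + |y|²))) · { e^{-|x|} ( -|x| sin|y| - |y| cos|y| ) - e^{-k|x|} ( -|x| sin(k|y|) - |y| cos(k|y|) ) }. -/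
/-!
Rotating `y` onto the first coordinate axis and integrating out the two transverse coordinates in
polar coordinates turns the Fourier integral of a radial function `g (‖p‖)` on `ℝ³` into
`2π ∫ t, e^{i‖y‖t} ∫_{u > |t|} u g(u) du dt`. Exchanging the order of integration, the inner
integral `∫_{-u}^{u} e^{i‖y‖t} dt = 2 sin(‖y‖u) / ‖y‖` leaves `(4π/‖y‖) ∫_0^∞ u sin(‖y‖u) g(u) du`.
For the profile `g(u) = χ_{[k,1]}(u) e^{-u‖x‖} / (‖x‖u)` this is an elementary integral of
`e^{-‖x‖u} sin(‖y‖u)`.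
-/

open MeasureTheory Real Complex Set

theorem hasDerivAt_exp_neg_mul_mul_sin_primitive (a b u : ℝ) (hab : a ^ 2 + b ^ 2 ≠ 0) :
    HasDerivAt
      (fun u => rexp (-a * u) * (-a * Real.sin (b * u) - b * Real.cos (b * u)) / (a ^ 2 + b ^ 2))
      (rexp (-a * u) * Real.sin (b * u)) u := by
  have hexp := ((hasDerivAt_id u).const_mul (-a)).exp
  have hsin := ((hasDerivAt_id u).const_mul b).sin
  have hcos := ((hasDerivAt_id u).const_mul b).cos
  refine (hexp.mul ((hsin.const_mul (-a)).sub (hcos.const_mul b))).div_const (a ^ 2 + b ^ 2)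
    |>.congr_deriv ?_
  simp only [Pi.sub_apply, id]
  field_simp
  ring

theorem integral_exp_neg_mul_mul_sin (a b c d : ℝ) (hab : a ^ 2 + b ^ 2 ≠ 0) :
    ∫ u in c..d, rexp (-a * u) * Real.sin (b * u) =
      (rexp (-a * d) * (-a * Real.sin (b * d) - b * Real.cos (b * d)) -
        rexp (-a * c) * (-a * Real.sin (b * c) - b * Real.cos (b * c))) / (a ^ 2 + b ^ 2) := by
  rw [intervalIntegral.integral_eq_sub_of_hasDerivAt
    (fun u _ => hasDerivAt_exp_neg_mul_mul_sin_primitive a b u hab)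
    ((by fun_prop : Continuous _).intervalIntegrable c d), sub_div]

theorem intervalIntegral.integral_cexp_I_mul_neg_self (b u : ℝ) (hb : b ≠ 0) :
    ∫ t in -u..u, cexp (I * (b * t : ℝ)) = (2 * Real.sin (b * u) / b : ℝ) := by
  have hIb : I * b ≠ 0 := mul_ne_zero I_ne_zero (ofReal_ne_zero.2 hb)
  simp_rw [ofReal_mul, ← mul_assoc]
  rw [integral_exp_mul_complex hIb]
  have e : ∀ s : ℝ, I * b * s = (b * s : ℝ) * I := fun s => by push_cast; ring
  rw [e, e, exp_mul_I, exp_mul_I, mul_neg, ofReal_neg, Complex.cos_neg, Complex.sin_neg]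
  push_cast
  field_simp
  ring

theorem sqrt_two_mul_two_mul_pi_rpow_neg_three_div_two :
    √2 * (2 * π) ^ (-(3 : ℝ) / 2) = 1 / (2 * π ^ (3 / 2 : ℝ)) := by
  rw [mul_rpow zero_le_two pi_pos.le, sqrt_eq_rpow, ← mul_assoc, ← rpow_add two_pos,
    show (-(3 : ℝ) / 2) = -(3 / 2) by norm_num, rpow_neg pi_pos.le]
  norm_num [mul_comm]

theorem EuclideanSpace.exists_measurePreserving_inner_eq_mul_fst {n : ℕ}
    (y : EuclideanSpace ℝ (Fin (n + 1))) (hy : y ≠ 0) :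
    ∃ Φ : (ℝ × EuclideanSpace ℝ (Fin n)) ≃ᵐ EuclideanSpace ℝ (Fin (n + 1)),
      MeasurePreserving Φ ∧
        ∀ z, inner ℝ (Φ z) y = ‖y‖ * z.1 ∧ ‖Φ z‖ = √(z.1 ^ 2 + ‖z.2‖ ^ 2) := by
  set e₀ : EuclideanSpace ℝ (Fin (n + 1)) := EuclideanSpace.single 0 1
  set R := Submodule.reflection (ℝ ∙ (e₀ - ‖y‖⁻¹ • y))ᗮ
  have hRe₀ : R e₀ = ‖y‖⁻¹ • y := Submodule.reflection_sub (by simp [e₀, norm_smul, hy])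
  let cons : (ℝ × EuclideanSpace ℝ (Fin n)) ≃ᵐ EuclideanSpace ℝ (Fin (n + 1)) :=
    (MeasurableEquiv.prodCongr (MeasurableEquiv.refl ℝ) (MeasurableEquiv.toLp 2 _).symm).trans
      ((MeasurableEquiv.piFinSuccAbove (fun _ => ℝ) 0).symm.trans (MeasurableEquiv.toLp 2 _))
  have hcons : ∀ z, cons z = WithLp.toLp 2 (Fin.cons z.1 z.2.ofLp) := fun z => by
    simp [cons, MeasurableEquiv.piFinSuccAbove, Fin.consEquiv, MeasurableEquiv.prodCongr]
  refine ⟨cons.trans R.toHomeomorph.toMeasurableEquiv, ?_, fun z => ⟨?_, ?_⟩⟩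
  · exact ((((MeasurePreserving.id volume).prod
      (EuclideanSpace.volume_preserving_symm_measurableEquiv_toLp (Fin n))).trans
      (volume_preserving_piFinSuccAbove (fun _ => ℝ) 0).symm).trans
      (EuclideanSpace.volume_preserving_symm_measurableEquiv_toLp _).symm).trans R.measurePreserving
  · have hy' : y = ‖y‖ • R e₀ := by
      rw [hRe₀, smul_smul, mul_inv_cancel₀ (norm_ne_zero_iff.2 hy), one_smul]
    show inner ℝ (R (cons z)) y = _
    conv_lhs => rw [hy']
    rw [real_inner_smul_right, LinearIsometryEquiv.inner_map_map, hcons]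
    simp [e₀, EuclideanSpace.inner_single_right]
  · show ‖R (cons z)‖ = _
    rw [LinearIsometryEquiv.norm_map, hcons, EuclideanSpace.norm_eq, Fin.sum_univ_succ,
      EuclideanSpace.norm_eq, Real.sq_sqrt (by positivity)]
    simp

section RadialIntegral

variable {E : Type*} [NormedAddCommGroup E] [NormedSpace ℝ E]

theorem integral_Ioi_smul_comp_sqrt_sq_add_sq (g : ℝ → E) (t : ℝ) :
    ∫ s in Ioi 0, s • g √(t ^ 2 + s ^ 2) = ∫ u in Ioi |t|, u • g u := by
  have hpos : ∀ s ∈ Ioi (0 : ℝ), 0 < t ^ 2 + s ^ 2 := fun s (hs : 0 < s) => by positivity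
  have hderiv : ∀ s ∈ Ioi (0 : ℝ), HasDerivWithinAt (fun s => √(t ^ 2 + s ^ 2))
      (s / √(t ^ 2 + s ^ 2)) (Ioi 0) s := fun s hs => by
    refine (((hasDerivAt_pow 2 s).const_add (t ^ 2)).sqrt (hpos s hs).ne').hasDerivWithinAt
      |>.congr_deriv ?_
    field_simp
    norm_num
  have hmono : StrictMonoOn (fun s => √(t ^ 2 + s ^ 2)) (Ioi 0) := fun s (hs : 0 < s) r _ hsr =>
    Real.sqrt_lt_sqrt (by positivity) (by nlinarith)
  have himage : (fun s => √(t ^ 2 + s ^ 2)) '' Ioi 0 = Ioi |t| := by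
    ext u
    constructor
    · rintro ⟨s, hs, rfl⟩
      rw [mem_Ioi, ← Real.sqrt_sq_eq_abs]
      exact Real.sqrt_lt_sqrt (sq_nonneg t) (by simpa using pow_pos (show (0 : ℝ) < s from hs) 2)
    · intro (hu : |t| < u)
      have htu : t ^ 2 < u ^ 2 := sq_lt_sq.2 (by rwa [abs_of_pos ((abs_nonneg t).trans_lt hu)])
      refine ⟨√(u ^ 2 - t ^ 2), Real.sqrt_pos.2 (by linarith), ?_⟩
      simp only
      rw [Real.sq_sqrt (by linarith), add_sub_cancel, Real.sqrt_sq ((abs_nonneg t).trans hu.le)]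
  rw [← himage, integral_image_eq_integral_abs_deriv_smul measurableSet_Ioi hderiv hmono.injOn]
  refine setIntegral_congr_fun measurableSet_Ioi fun s hs => ?_
  have hsqrt := Real.sqrt_pos.2 (hpos s hs)
  rw [smul_smul, abs_of_pos (div_pos hs hsqrt), div_mul_cancel₀ _ hsqrt.ne']

theorem EuclideanSpace.integral_comp_sqrt_sq_add_norm_sq_fin_two (g : ℝ → E) (t : ℝ) :
    ∫ w : EuclideanSpace ℝ (Fin 2), g √(t ^ 2 + ‖w‖ ^ 2) = (2 * π) • ∫ u in Ioi |t|, u • g u := by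
  rw [integral_fun_norm_addHaar volume (fun r => g √(t ^ 2 + r ^ 2)), finrank_euclideanSpace_fin,
    measureReal_def, EuclideanSpace.volume_ball_fin_two]
  simp [integral_Ioi_smul_comp_sqrt_sq_add_sq, ENNReal.toReal_ofReal pi_pos.le,
    ← Nat.cast_smul_eq_nsmul ℝ, smul_smul, mul_comm]

end RadialIntegral

theorem integral_mul_setIntegral_Ioi_abs {f h : ℝ → ℂ} (hf : Continuous f) {C : ℝ}
    (hC : ∀ t, ‖f t‖ ≤ C) (hh : Measurable h) (hint : IntegrableOn (fun u => u * h u) (Ioi 0)) :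
    ∫ t, f t * ∫ u in Ioi |t|, h u = ∫ u in Ioi 0, (∫ t in -u..u, f t) * h u := by
  set φ : ℝ × ℝ → ℂ := {z | |z.1| < z.2}.indicator fun z => f z.1 * h z.2
  have hslice_fst : ∀ t u, φ (t, u) = (Ioi |t|).indicator (fun u => f t * h u) u :=
    fun _ _ => rfl
  have hslice_snd : ∀ t u, φ (t, u) = (Ioo (-u) u).indicator (fun t => f t * h u) t := by
    simp [φ, indicator, abs_lt]
  have hφ_meas : AEStronglyMeasurable φ (volume.prod volume) :=
    ((by fun_prop : Measurable fun z : ℝ × ℝ => f z.1 * h z.2).indicator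
      (measurableSet_lt (by fun_prop) measurable_snd)).aestronglyMeasurable
  have hbound : ∀ u, ‖∫ t, ‖φ (t, u)‖‖ ≤ (Ioi 0).indicator (fun u => 2 * C * ‖u * h u‖) u := by
    intro u
    simp only [hslice_snd, norm_indicator_eq_indicator_norm]
    rw [integral_indicator measurableSet_Ioo]
    by_cases hu : 0 < u
    · rw [indicator_of_mem (mem_Ioi.2 hu)]
      calc _ ≤ C * ‖h u‖ * volume.real (Ioo (-u) u) :=
            norm_setIntegral_le_of_norm_le_const measure_Ioo_lt_top fun t _ => by
              rw [norm_norm, norm_mul]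
              gcongr
              exact hC t
        _ = 2 * C * ‖u * h u‖ := by
            rw [volume_real_Ioo_of_le (by linarith), norm_mul, Complex.norm_real,
              Real.norm_of_nonneg hu.le]
            ring
    · rw [indicator_of_notMem (mt mem_Ioi.1 hu), Ioo_eq_empty (by linarith),
        Measure.restrict_empty, integral_zero_measure, norm_zero]
  have hφ : Integrable φ (volume.prod volume) := by
    refine (integrable_prod_iff' hφ_meas).2 ⟨ae_of_all _ fun u => ?_, ?_⟩
    · simp only [hslice_snd]
      rw [integrable_indicator_iff measurableSet_Ioo]
      exact (hf.mul continuous_const).integrableOn_Icc.mono_set Ioo_subset_Icc_self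
    · have hint' : IntegrableOn (fun u => 2 * C * ‖u * h u‖) (Ioi 0) := hint.norm.const_mul _
      exact (hint'.integrable_indicator measurableSet_Ioi).mono'
        hφ_meas.norm.prod_swap.integral_prod_right' (ae_of_all _ hbound)
  calc ∫ t, f t * ∫ u in Ioi |t|, h u = ∫ t, ∫ u, φ (t, u) := by
        simp only [hslice_fst, integral_indicator measurableSet_Ioi, integral_const_mul]
    _ = ∫ u, ∫ t, φ (t, u) := integral_integral_swap hφ
    _ = ∫ u in Ioi 0, (∫ t in -u..u, f t) * h u := by
        rw [← integral_indicator measurableSet_Ioi]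
        refine integral_congr_ae (ae_of_all _ fun u => ?_)
        simp only [hslice_snd]
        rw [integral_indicator measurableSet_Ioo, integral_mul_const]
        by_cases hu : 0 < u
        · rw [indicator_of_mem (mem_Ioi.2 hu), intervalIntegral.integral_of_le (by linarith),
            integral_Ioc_eq_integral_Ioo]
        · rw [indicator_of_notMem (mt mem_Ioi.1 hu), Ioo_eq_empty (by linarith),
            Measure.restrict_empty, integral_zero_measure, zero_mul]

theorem EuclideanSpace.integral_cexp_inner_mul_radial_fin_three {y : EuclideanSpace ℝ (Fin 3)}
    (hy : y ≠ 0) {g : ℝ → ℂ} (hg : Measurable g)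
    (hint : IntegrableOn (fun u => u ^ 2 * g u) (Ioi 0)) :
    ∫ p, cexp (I * (inner ℝ p y : ℝ)) * g ‖p‖ =
      (4 * π / ‖y‖ : ℝ) * ∫ u in Ioi 0, u * Real.sin (‖y‖ * u) * g u := by
  obtain ⟨Φ, hΦ, hΦz⟩ := exists_measurePreserving_inner_eq_mul_fst y hy
  set b := ‖y‖
  have hb : b ≠ 0 := norm_ne_zero_iff.2 hy
  have hf_bound : ∀ t : ℝ, ‖cexp (I * t)‖ ≤ 1 := fun t => by
    rw [mul_comm, norm_exp_ofReal_mul_I]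
  have hF : Integrable fun p : EuclideanSpace ℝ (Fin 3) => cexp (I * (inner ℝ p y : ℝ)) * g ‖p‖ :=
    ((integrable_fun_norm_addHaar volume).2 (by simpa [finrank_euclideanSpace_fin] using hint)
      |>.bdd_mul (by fun_prop) (ae_of_all _ fun p => hf_bound _))
  have hFΦ : (fun z => cexp (I * (inner ℝ (Φ z) y : ℝ)) * g ‖Φ z‖) =
      fun z => cexp (I * (b * z.1 : ℝ)) * g √(z.1 ^ 2 + ‖z.2‖ ^ 2) := by
    simp only [hΦz]
  have hG : Integrable (fun z : ℝ × EuclideanSpace ℝ (Fin 2) =>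
      cexp (I * (b * z.1 : ℝ)) * g √(z.1 ^ 2 + ‖z.2‖ ^ 2)) (volume.prod volume) :=
    hFΦ ▸ (hΦ.integrable_comp_emb Φ.measurableEmbedding).2 hF
  have hint' : IntegrableOn (fun u : ℝ => u * (u * g u)) (Ioi 0) := by
    simpa [sq, mul_assoc] using hint
  rw [← hΦ.integral_comp', hFΦ, Measure.volume_eq_prod, integral_prod _ hG]
  simp only [integral_const_mul, EuclideanSpace.integral_comp_sqrt_sq_add_norm_sq_fin_two]
  simp_rw [mul_smul_comm, integral_smul, real_smul]
  rw [integral_mul_setIntegral_Ioi_abs (by fun_prop) (fun t => hf_bound _) (by fun_prop) hint',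
    ← integral_const_mul, ← integral_const_mul]
  refine setIntegral_congr_fun measurableSet_Ioi fun u _ => ?_
  rw [intervalIntegral.integral_cexp_I_mul_neg_self b u hb]
  push_cast
  field_simp
  ring

theorem integrableOn_Ioi_sq_mul_indicator_Icc_mul_exp_div {a k : ℝ} (ha : a ≠ 0) (hk : 0 < k) :
    IntegrableOn (fun u => u ^ 2 * ((Icc k 1).indicator (fun _ => 1) u * rexp (-u * a) / (a * u)))
      (Ioi 0) := by
  refine IntegrableOn.of_forall_sdiff_eq_zero (s := Icc k 1) ?_ measurableSet_Ioi
    fun u hu => by simp [indicator_of_notMem hu.2]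
  refine ContinuousOn.integrableOn_Icc (ContinuousOn.congr
    (f := fun u => u ^ 2 * (rexp (-u * a) / (a * u))) ?_
    fun u hu => by simp [indicator_of_mem hu])
  have hden : ∀ u ∈ Icc k 1, a * u ≠ 0 := fun u hu => mul_ne_zero ha (hk.trans_le hu.1).ne'
  exact (continuous_pow 2).continuousOn.mul
    ((by fun_prop : Continuous _).continuousOn.div (by fun_prop) hden)

theorem setIntegral_Ioi_mul_sin_mul_indicator_Icc_mul_exp_div (a b : ℝ) {k : ℝ} (ha : a ≠ 0)
    (hk : 0 < k) (hk1 : k ≤ 1) :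
    ∫ u in Ioi 0, u * Real.sin (b * u) * ((Icc k 1).indicator (fun _ => 1) u * rexp (-u * a) /
      (a * u)) = (∫ u in k..1, rexp (-a * u) * Real.sin (b * u)) / a := by
  have hsupp : ∀ u ∈ Ioi (0 : ℝ),
      u * Real.sin (b * u) * ((Icc k 1).indicator (fun _ => 1) u * rexp (-u * a) / (a * u)) =
        (Icc k 1).indicator (fun u => rexp (-a * u) * Real.sin (b * u) / a) u := by
    intro u (hu : 0 < u)
    by_cases huk : u ∈ Icc k 1
    · simp only [indicator_of_mem huk]
      field_simp
    · simp [indicator_of_notMem huk]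
  rw [setIntegral_congr_fun measurableSet_Ioi hsupp, setIntegral_indicator measurableSet_Icc,
    inter_eq_right.2 ((Icc_subset_Ioi_iff hk1).2 hk), integral_Icc_eq_integral_Ioc,
    ← intervalIntegral.integral_of_le hk1, intervalIntegral.integral_div]

theorem stmt_14 (x y : EuclideanSpace ℝ (Fin 3)) (hx : x ≠ 0) (hy : y ≠ 0)
    (k : ℝ) (hk : k ∈ Set.Ioo (0 : ℝ) 1) :
    ((Real.sqrt 2 / (4 * π) * (2 * π) ^ (-(3 : ℝ) / 2) : ℝ) : ℂ) *
      ∫ p : EuclideanSpace ℝ (Fin 3),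
        Complex.exp (Complex.I * ((inner ℝ p y : ℝ) : ℂ)) *
          ((Set.indicator (Set.Icc k 1) (fun _ => (1 : ℝ)) ‖p‖ *
              Real.exp (-‖p‖ * ‖x‖) / (‖x‖ * ‖p‖) : ℝ) : ℂ)
    = (((1 / (2 * π ^ (3 / 2 : ℝ))) * (1 / (‖x‖ * ‖y‖ * (‖x‖ ^ 2 + ‖y‖ ^ 2))) *
        (Real.exp (-‖x‖) * (-‖x‖ * Real.sin ‖y‖ - ‖y‖ * Real.cos ‖y‖) -
         Real.exp (-k * ‖x‖) *
           (-‖x‖ * Real.sin (k * ‖y‖) - ‖y‖ * Real.cos (k * ‖y‖))) : ℝ) : ℂ) := by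
  obtain ⟨hk0, hk1⟩ := hk
  have ha : ‖x‖ ≠ 0 := norm_ne_zero_iff.2 hx
  set r : ℝ → ℝ := fun u => (Icc k 1).indicator (fun _ => 1) u * rexp (-u * ‖x‖) / (‖x‖ * u)
  have hr : Measurable r :=
    ((measurable_const.indicator measurableSet_Icc).mul (by fun_prop)).div (by fun_prop)
  have hint : IntegrableOn (fun u : ℝ => (u : ℂ) ^ 2 * (r u : ℂ)) (Ioi 0) := by
    refine ((integrableOn_Ioi_sq_mul_indicator_Icc_mul_exp_div ha hk0).ofReal (𝕜 := ℂ)).congr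
      (ae_of_all _ fun u => ?_)
    simp [r]
  rw [EuclideanSpace.integral_cexp_inner_mul_radial_fin_three hy (g := fun u => (r u : ℂ))
    hr.complex_ofReal hint]
  have hcast : ∫ u : ℝ in Ioi 0, (u : ℂ) * (Real.sin (‖y‖ * u) : ℂ) * (r u : ℂ) =
      ((∫ u in Ioi 0, u * Real.sin (‖y‖ * u) * r u : ℝ) : ℂ) := by
    rw [← integral_complex_ofReal]
    simp only [ofReal_mul]
  rw [hcast, setIntegral_Ioi_mul_sin_mul_indicator_Icc_mul_exp_div _ _ ha hk0 hk1.le,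
    integral_exp_neg_mul_mul_sin _ _ k 1 (by positivity), ← ofReal_mul, ← ofReal_mul, ofReal_inj,
    ← sqrt_two_mul_two_mul_pi_rpow_neg_three_div_two]
  field_simp
end
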